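/- Let ℱ be an m×n Ferrers diagram and δ ∈ {1,...,n}. For r ∈ [m] let D_r = {(i,j) ∈ [m]×[n] : j − i = n − r} denote the r-th diagonal. Then ν_min(ℱ;δ) ≥ Σ_{i=δ}^{m} max{|D_i ∩ ℱ| − δ + 1, 0}. -/

import Mathlib

/-!
Fix `j < δ` and put `e = δ - 1 - j`. Call a cell of `ℱ` good if, on its own diagonal, at least
`j` cells of `ℱ` lie to its left and at least `e` to its right. On a diagonal carrying `d` cells,
all but the `j` leftmost and the `e` rightmost are good, so at least `d - (δ - 1)` of them. A good
cell has row at least `j` (the cells to its left sit in distinct smaller rows) and column less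
than `n - e` (the cells to its right sit in distinct larger columns). Since the columns of a
Ferrers diagram are initial segments of rows, column `t` holds at most `c_t - j` cells of row at
least `j`, and summing over the columns `t < n - e` bounds the number of good cells.
-/

open Finset

section RankCount

variable {α β : Type*} [LinearOrder α]

theorem card_filter_card_lt_lt_le (S : Finset β) {f : β → α} (hf : Set.InjOn f S) (j : ℕ) :
    #{x ∈ S | #{y ∈ S | f y < f x} < j} ≤ j := by
  classical
  set L := {x ∈ S | #{y ∈ S | f y < f x} < j}
  rcases L.eq_empty_or_nonempty with hL | hL
  · simp [hL]
  -- every other element of `L` lies below the element of `L` with the largest key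
  obtain ⟨x, hxL, hmax⟩ := L.exists_max_image f hL
  have hxS := (mem_filter.1 hxL).1
  have hsub : L.erase x ⊆ {y ∈ S | f y < f x} := by
    intro y hy
    obtain ⟨hyx, hyL⟩ := mem_erase.1 hy
    have hyS := (mem_filter.1 hyL).1
    exact mem_filter.2 ⟨hyS, (hmax y hyL).lt_of_ne fun h => hyx (hf hyS hxS h)⟩
  have hcard := card_le_card hsub
  rw [card_erase_of_mem hxL] at hcard
  have := (mem_filter.1 hxL).2
  omega

theorem card_sub_le_card_filter_le_card_lt_and_le_card_gt (S : Finset β) {f : β → α}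
    (hf : Set.InjOn f S) (j e : ℕ) :
    #S - (j + e) ≤ #{x ∈ S | j ≤ #{y ∈ S | f y < f x} ∧ e ≤ #{y ∈ S | f x < f y}} := by
  classical
  have hbelow := card_filter_card_lt_lt_le S hf j
  have habove : #{x ∈ S | #{y ∈ S | f x < f y} < e} ≤ e :=
    card_filter_card_lt_lt_le S (f := fun x => OrderDual.toDual (f x)) hf e
  have hcover : S ⊆ {x ∈ S | j ≤ #{y ∈ S | f y < f x} ∧ e ≤ #{y ∈ S | f x < f y}} ∪
      ({x ∈ S | #{y ∈ S | f y < f x} < j} ∪ {x ∈ S | #{y ∈ S | f x < f y} < e}) := by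
    intro x hx
    simp only [mem_union, mem_filter, hx, true_and]
    omega
  have := (card_le_card hcover).trans
    ((card_union_le _ _).trans (Nat.add_le_add_left (card_union_le _ _) _))
  omega

end RankCount

section Diagonal

variable {m n : ℕ} (ℱ : Finset (Fin m × Fin n))

def diagCells (r : ℕ) : Finset (Fin m × Fin n) :=
  {p ∈ ℱ | (p.2 : ℕ) + r = (p.1 : ℕ) + n}

theorem mem_diagCells {r : ℕ} {p : Fin m × Fin n} :
    p ∈ diagCells ℱ r ↔ p ∈ ℱ ∧ (p.2 : ℕ) + r = (p.1 : ℕ) + n :=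
  mem_filter

theorem injOn_fst_diagCells (r : ℕ) :
    Set.InjOn Prod.fst (diagCells ℱ r : Set (Fin m × Fin n)) := by
  intro p hp q hq h
  rw [mem_coe, mem_diagCells] at hp hq
  have := congrArg Fin.val h
  exact Prod.ext h (Fin.ext (by omega))

theorem injOn_snd_diagCells (r : ℕ) :
    Set.InjOn Prod.snd (diagCells ℱ r : Set (Fin m × Fin n)) := by
  intro p hp q hq h
  rw [mem_coe, mem_diagCells] at hp hq
  have := congrArg Fin.val h
  exact Prod.ext (Fin.ext (by omega)) h

theorem card_left_diagCells_le {r : ℕ} {p : Fin m × Fin n} (hp : p ∈ diagCells ℱ r) :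
    #{q ∈ diagCells ℱ r | q.2 < p.2} ≤ p.1 := by
  rw [mem_diagCells] at hp
  calc #{q ∈ diagCells ℱ r | q.2 < p.2}
      ≤ #(Iio p.1) := card_le_card_of_injOn Prod.fst (fun q hq => by
          rw [mem_coe, mem_filter, mem_diagCells, Fin.lt_def] at hq
          rw [mem_coe, mem_Iio, Fin.lt_def]
          omega)
        ((injOn_fst_diagCells ℱ r).mono (coe_subset.2 (filter_subset _ _)))
    _ = p.1 := Fin.card_Iio _

theorem card_right_diagCells_add_lt (r : ℕ) (p : Fin m × Fin n) :
    #{q ∈ diagCells ℱ r | p.2 < q.2} + p.2 < n := by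
  have : #{q ∈ diagCells ℱ r | p.2 < q.2} ≤ #(Ioi p.2) :=
    card_le_card_of_injOn Prod.snd (fun q hq => by
        rw [mem_coe, mem_filter] at hq
        exact mem_Ioi.2 hq.2)
      ((injOn_snd_diagCells ℱ r).mono (coe_subset.2 (filter_subset _ _)))
  rw [Fin.card_Ioi] at this
  have := p.2.isLt
  omega

def goodDiagCells (r j e : ℕ) : Finset (Fin m × Fin n) :=
  {p ∈ diagCells ℱ r |
    j ≤ #{q ∈ diagCells ℱ r | q.2 < p.2} ∧ e ≤ #{q ∈ diagCells ℱ r | p.2 < q.2}}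

theorem card_diagCells_sub_le_card_goodDiagCells (r j e : ℕ) :
    #(diagCells ℱ r) - (j + e) ≤ #(goodDiagCells ℱ r j e) :=
  card_sub_le_card_filter_le_card_lt_and_le_card_gt _ (injOn_snd_diagCells ℱ r) j e

theorem goodDiagCells_subset {r j e c : ℕ} (hc : n ≤ c + e) :
    goodDiagCells ℱ r j e ⊆ {p ∈ ℱ | (p.2 : ℕ) < c ∧ j ≤ (p.1 : ℕ)} := by
  intro p hp
  obtain ⟨hpD, hleft, hright⟩ := mem_filter.1 hp
  have := card_left_diagCells_le ℱ hpD
  have := card_right_diagCells_add_lt ℱ r p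
  exact mem_filter.2 ⟨((mem_diagCells ℱ).1 hpD).1, by omega, by omega⟩

theorem sum_card_goodDiagCells_le (s : Finset ℕ) {j e c : ℕ} (hc : n ≤ c + e) :
    ∑ r ∈ s, #(goodDiagCells ℱ r j e) ≤ #{p ∈ ℱ | (p.2 : ℕ) < c ∧ j ≤ (p.1 : ℕ)} := by
  rw [← card_biUnion]
  · exact card_le_card (biUnion_subset.2 fun r _ => goodDiagCells_subset ℱ hc)
  · intro r _ r' _ hne
    refine disjoint_left.2 fun p hp hp' => hne ?_
    have := ((mem_diagCells ℱ).1 (mem_filter.1 hp).1).2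
    have := ((mem_diagCells ℱ).1 (mem_filter.1 hp').1).2
    omega

end Diagonal

section Columns

variable {m n : ℕ} {ℱ : Finset (Fin m × Fin n)}

theorem card_filter_snd_eq_and_le_fst_le_card_sub
    (htop : ∀ p ∈ ℱ, ∀ i' : Fin m, i' ≤ p.1 → (i', p.2) ∈ ℱ) (t : Fin n) (j : ℕ) :
    #{p ∈ ℱ | p.2 = t ∧ j ≤ (p.1 : ℕ)} ≤ #{p ∈ ℱ | p.2 = t} - j := by
  rcases eq_empty_or_nonempty {p ∈ ℱ | p.2 = t ∧ j ≤ (p.1 : ℕ)} with h | ⟨p, hp⟩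
  · simp [h]
  obtain ⟨hpℱ, rfl, hjp⟩ := mem_filter.1 hp
  have hjm : j < m := hjp.trans_lt p.1.isLt
  have hlow : j ≤ #{q ∈ {q ∈ ℱ | q.2 = p.2} | (q.1 : ℕ) < j} :=
    calc j = #(Iio (⟨j, hjm⟩ : Fin m)) := (Fin.card_Iio (⟨j, hjm⟩ : Fin m)).symm
      _ ≤ _ := card_le_card_of_injOn (fun i => (i, p.2))
          (fun i hi => by
            have hij : (i : ℕ) < j := by simpa [Fin.lt_def] using hi
            simpa [hij] using htop p hpℱ i (Fin.le_def.2 (by omega)))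
          (fun _ _ _ _ h => congrArg Prod.fst h)
  have hhigh : #{p' ∈ ℱ | p'.2 = p.2 ∧ j ≤ (p'.1 : ℕ)} =
      #{q ∈ {q ∈ ℱ | q.2 = p.2} | ¬ (q.1 : ℕ) < j} := by
    simp only [filter_filter, not_lt]
  have := card_filter_add_card_filter_not (s := {q ∈ ℱ | q.2 = p.2}) (fun q => (q.1 : ℕ) < j)
  omega

theorem card_filter_snd_lt_and_le_fst_le_sum
    (htop : ∀ p ∈ ℱ, ∀ i' : Fin m, i' ≤ p.1 → (i', p.2) ∈ ℱ) (c j : ℕ) :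
    #{p ∈ ℱ | (p.2 : ℕ) < c ∧ j ≤ (p.1 : ℕ)} ≤
      ∑ t ∈ univ.filter (fun t : Fin n => (t : ℕ) < c), (#{p ∈ ℱ | p.2 = t} - j) := by
  rw [card_eq_sum_card_fiberwise (f := Prod.snd) (t := univ.filter fun t : Fin n => (t : ℕ) < c)
    fun p hp => by simpa using (mem_filter.1 hp).2.1]
  refine sum_le_sum fun t ht =>
    le_of_eq_of_le ?_ (card_filter_snd_eq_and_le_fst_le_card_sub htop t j)
  have htc := (mem_filter.1 ht).2
  rw [filter_filter]
  congr 1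
  ext p
  simp only [mem_filter]
  constructor
  · rintro ⟨hp, ⟨-, hj⟩, rfl⟩; exact ⟨hp, rfl, hj⟩
  · rintro ⟨hp, rfl, hj⟩; exact ⟨hp, ⟨htc, hj⟩, rfl⟩

end Columns

/-- For an `m×n` Ferrers diagram `ℱ` and `δ ∈ {1,…,n}`,
`ν_min(ℱ;δ) ≥ Σ_{r=δ}^{m} max{|D_r ∩ ℱ| − δ + 1, 0}`, where `D_r` is the `r`-th
diagonal `{(i,j) : j − i = n − r}` (1-based; in 0-based coordinates
`(p₁, p₂) ∈ D_r ↔ p₂ + r = p₁ + n`). -/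
theorem stmt16 {m n δ : ℕ} (hδ1 : 1 ≤ δ)
    (ℱ : Finset (Fin m × Fin n))
    (htop : ∀ p ∈ ℱ, ∀ i' : Fin m, i' ≤ p.1 → (i', p.2) ∈ ℱ) :
    ∑ r ∈ Finset.Icc δ m,
        ((ℱ.filter fun p => (p.2 : ℕ) + r = (p.1 : ℕ) + n).card - (δ - 1)) ≤
      (Finset.range δ).inf' (Finset.nonempty_range_iff.mpr (by omega))
        (fun j => ∑ t ∈ Finset.univ.filter (fun t : Fin n => (t : ℕ) < n - δ + 1 + j),
          ((ℱ.filter fun p => p.2 = t).card - j)) := by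
  refine le_inf' _ _ fun j hj => ?_
  have hjδ : j < δ := mem_range.1 hj
  calc ∑ r ∈ Icc δ m, (#(diagCells ℱ r) - (δ - 1))
      ≤ ∑ r ∈ Icc δ m, #(goodDiagCells ℱ r j (δ - 1 - j)) := sum_le_sum fun r _ => by
        have := card_diagCells_sub_le_card_goodDiagCells ℱ r j (δ - 1 - j)
        omega
    _ ≤ #{p ∈ ℱ | (p.2 : ℕ) < n - δ + 1 + j ∧ j ≤ (p.1 : ℕ)} :=
        sum_card_goodDiagCells_le ℱ _ (by omega)
    _ ≤ _ := card_filter_snd_lt_and_le_fst_le_sum htop _ _
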